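/- arXiv:1605.09201 — 2 statements merged into one kernel-verified Lean document; each statement's English description precedes it below -/
import Mathlib

section
/- (Multi-dimensional cell convergence to the delta of a graph, Lemma on rescaled Hough counters.) Let E′ ⊆ ℝ^{t−1} be open (t ≥ 2), Ξ ⊆ ℝ with accumulation point ξ̄. For each ξ ∈ Ξ let U_ξ, V_ξ : E′ → ℝ be piecewise C¹ with V_ξ − U_ξ > ε_ξ > 0, both converging pointwise to a common limit G ∈ C¹(E′), with u_ξ := U_ξ − G and v_ξ := V_ξ − G uniformly bounded by a constant M. Set C_ξ = {(λ′,λ_t) : U_ξ(λ′) ≤ λ_t < V_ξ(λ′)} and T_ξ = 𝟙_{C_ξ}/(V_ξ − U_ξ). Then for every ψ ∈ C¹_c(E′×ℝ): ∫_{E′×ℝ} T_ξ(λ) ψ(λ) dλ → ∫_{E′} ψ(λ′, G(λ′)) dλ′ as ξ → ξ̄. -/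
open MeasureTheory Filter

/-- A real function is piecewise `C¹` if there is a countable family of open sets with
negligible boundaries whose closures cover the space, on each of which it is `C¹`. -/
def PiecewiseC1 {X : Type*} [NormedAddCommGroup X] [NormedSpace ℝ X] [MeasureSpace X]
    (f : X → ℝ) : Prop :=
  ∃ Q : Set (Set X), Q.Countable ∧
    (∀ u ∈ Q, IsOpen u ∧ volume (frontier u) = 0 ∧ ContDiffOn ℝ 1 f u) ∧
    (Set.univ ⊆ ⋃ u ∈ Q, closure u)

/-! By Fubini, pairing `ψ` with `𝟙_{C_ξ}/(V_ξ − U_ξ)` is the integral over `λ′` of the average of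
`ψ(λ′, ·)` over `[U_ξ(λ′), V_ξ(λ′))`. These intervals shrink to `G(λ′)`, so by continuity of `ψ`
the averages tend to `ψ(λ′, G(λ′))`; they are bounded by `sup ‖ψ‖` on the compact projection of
the support of `ψ`, and dominated convergence concludes. -/

open Set Topology

lemma PiecewiseC1.aemeasurable {X : Type*} [NormedAddCommGroup X] [NormedSpace ℝ X]
    [MeasureSpace X] [OpensMeasurableSpace X] {f : X → ℝ} (hf : PiecewiseC1 f) :
    AEMeasurable f := by
  obtain ⟨Q, hQc, hQ, hcov⟩ := hf
  have hcompl : (⋃ u ∈ Q, u)ᶜ ⊆ ⋃ u ∈ Q, frontier u := by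
    intro x hx
    obtain ⟨u, hu, hxu⟩ := mem_iUnion₂.1 (hcov (mem_univ x))
    refine mem_iUnion₂.2 ⟨u, hu, hxu, ?_⟩
    rw [(hQ u hu).1.interior_eq]
    exact fun h => hx (mem_iUnion₂.2 ⟨u, hu, h⟩)
  have hae : ∀ᵐ x, x ∈ ⋃ u ∈ Q, u :=
    measure_mono_null hcompl ((measure_biUnion_null_iff hQc).2 fun u hu => (hQ u hu).2.1)
  rw [← Measure.restrict_eq_self_of_ae_mem hae]
  have := hQc.to_subtype
  rw [biUnion_eq_iUnion, aemeasurable_iUnion_iff]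
  exact fun u => (hQ u u.2).2.2.continuousOn.aemeasurable (hQ u u.2).1.measurableSet

variable {X E : Type*} [NormedAddCommGroup E] [NormedSpace ℝ E]

lemma setAverage_Ico_eq_integral_inv_sub_smul (f : ℝ → E) (a b : ℝ) :
    ⨍ y in Ico a b, f y = ∫ y in Ico a b, (b - a)⁻¹ • f y := by
  rw [setAverage_eq, integral_smul]
  rcases le_or_gt b a with hba | hab
  · simp [Ico_eq_empty_of_le hba]
  · rw [Real.volume_real_Ico_of_le hab.le]

lemma setAverage_Ico_mem_closedBall [CompleteSpace E] {f : ℝ → E} (hf : LocallyIntegrable f)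
    {a b : ℝ} (hab : a < b) {z : E} {r : ℝ} (hfr : ∀ y ∈ Ico a b, f y ∈ Metric.closedBall z r) :
    ⨍ y in Ico a b, f y ∈ Metric.closedBall z r :=
  (convex_closedBall z r).set_average_mem Metric.isClosed_closedBall (by simp [hab]) (by simp)
    (ae_restrict_of_forall_mem measurableSet_Ico hfr)
    ((hf.integrableOn_isCompact isCompact_Icc).mono_set Ico_subset_Icc_self)

lemma tendsto_setAverage_Ico [CompleteSpace E] {ι : Type*} {l : Filter ι} {f : ℝ → E} {c : ℝ}
    (hfc : ContinuousAt f c) (hf : LocallyIntegrable f) {a b : ι → ℝ}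
    (ha : Tendsto a l (𝓝 c)) (hb : Tendsto b l (𝓝 c)) (hab : ∀ᶠ i in l, a i < b i) :
    Tendsto (fun i => ⨍ y in Ico (a i) (b i), f y) l (𝓝 (f c)) := by
  refine Metric.nhds_basis_closedBall.tendsto_right_iff.2 fun δ hδ => ?_
  obtain ⟨r, hr, hball⟩ := Metric.mem_nhds_iff.1 (hfc (Metric.closedBall_mem_nhds (f c) hδ))
  filter_upwards [hab, ha (Metric.ball_mem_nhds c hr), hb (Metric.ball_mem_nhds c hr)]
    with i hi hai hbi
  refine setAverage_Ico_mem_closedBall hf hi fun y hy => hball ?_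
  rw [Real.ball_eq_Ioo] at hai hbi ⊢
  exact ordConnected_Ioo.out hai hbi (Ico_subset_Icc_self hy)

def cell (u v : X → ℝ) : Set (X × ℝ) := {p | u p.1 ≤ p.2 ∧ p.2 < v p.1}

lemma setAverage_Ico_eq_integral_indicator_cell (u v : X → ℝ) (ψ : X × ℝ → E) (x : X) :
    ⨍ y in Ico (u x) (v x), ψ (x, y) =
      ∫ y, (cell u v).indicator (fun p => (v p.1 - u p.1)⁻¹ • ψ p) (x, y) := by
  rw [setAverage_Ico_eq_integral_inv_sub_smul, ← integral_indicator measurableSet_Ico]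
  -- `(x, y) ∈ cell u v` unfolds to `y ∈ Ico (u x) (v x)`
  rfl

section Topological

variable [CompleteSpace E] [TopologicalSpace X] {ψ : X × ℝ → E}

lemma norm_setAverage_Ico_le_indicator {u v : X → ℝ} (hψ : Continuous ψ) {C : ℝ}
    (hC : ∀ p, ‖ψ p‖ ≤ C) (huv : ∀ x ∈ Prod.fst '' tsupport ψ, u x < v x) (x : X) :
    ‖⨍ y in Ico (u x) (v x), ψ (x, y)‖ ≤ (Prod.fst '' tsupport ψ).indicator (fun _ => C) x := by
  by_cases hx : x ∈ Prod.fst '' tsupport ψ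
  · rw [indicator_of_mem hx, ← mem_closedBall_zero_iff]
    exact setAverage_Ico_mem_closedBall (hψ.comp (Continuous.prodMk_right x)).locallyIntegrable
      (huv x hx) fun y _ => mem_closedBall_zero_iff.2 (hC _)
  · have hψx : ∀ y, ψ (x, y) = 0 := fun y =>
      image_eq_zero_of_notMem_tsupport fun h => hx ⟨_, h, rfl⟩
    simp [hψx, hx]

lemma tendsto_setAverage_Ico_indicator {ι : Type*} {l : Filter ι} {u v : ι → X → ℝ}
    {g : X → ℝ} {s : Set X} (hψ : Continuous ψ) (hψs : tsupport ψ ⊆ s ×ˢ univ)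
    (huv : ∀ᶠ i in l, ∀ x ∈ s, u i x < v i x)
    (hu : ∀ x ∈ s, Tendsto (fun i => u i x) l (𝓝 (g x)))
    (hv : ∀ x ∈ s, Tendsto (fun i => v i x) l (𝓝 (g x))) (x : X) :
    Tendsto (fun i => ⨍ y in Ico (u i x) (v i x), ψ (x, y)) l
      (𝓝 (s.indicator (fun x => ψ (x, g x)) x)) := by
  by_cases hx : x ∈ s
  · have hψx : Continuous fun y => ψ (x, y) := hψ.comp (Continuous.prodMk_right x)
    rw [indicator_of_mem hx]
    exact tendsto_setAverage_Ico hψx.continuousAt hψx.locallyIntegrable (hu x hx) (hv x hx)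
      (huv.mono fun i hi => hi x hx)
  · have hψx : ∀ y, ψ (x, y) = 0 := fun y =>
      image_eq_zero_of_notMem_tsupport fun h => hx (hψs h).1
    simpa [hψx, hx] using tendsto_const_nhds

end Topological

section Measurable

variable [MeasurableSpace X] {μ : Measure X} {u v : X → ℝ} {ψ : X × ℝ → E}

lemma nullMeasurableSet_cell (hu : AEMeasurable u μ) (hv : AEMeasurable v μ) :
    NullMeasurableSet (cell u v) (μ.prod volume) :=
  (nullMeasurableSet_le hu.comp_fst measurable_snd.aemeasurable).inter
    (nullMeasurableSet_lt measurable_snd.aemeasurable hv.comp_fst)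

lemma integrable_inv_sub_smul (hu : AEMeasurable u μ) (hv : AEMeasurable v μ)
    (hψ : Integrable ψ (μ.prod volume)) {ε : ℝ} (hε : 0 < ε)
    (hgap : ∀ p, ψ p ≠ 0 → ε ≤ v p.1 - u p.1) :
    Integrable (fun p => (v p.1 - u p.1)⁻¹ • ψ p) (μ.prod volume) := by
  refine (hψ.norm.const_mul ε⁻¹).mono'
    ((hv.comp_fst.sub hu.comp_fst).inv.aestronglyMeasurable.smul hψ.aestronglyMeasurable)
    (Eventually.of_forall fun p => ?_)
  by_cases hp : ψ p = 0
  · simp [hp]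
  · have hεp := hgap p hp
    rw [norm_smul, norm_inv, Real.norm_of_nonneg (hε.le.trans hεp)]
    gcongr

lemma integrable_setAverage_Ico (hu : AEMeasurable u μ) (hv : AEMeasurable v μ)
    (hint : Integrable (fun p => (v p.1 - u p.1)⁻¹ • ψ p) (μ.prod volume)) :
    Integrable (fun x => ⨍ y in Ico (u x) (v x), ψ (x, y)) μ := by
  simp_rw [setAverage_Ico_eq_integral_indicator_cell]
  exact (hint.indicator₀ (nullMeasurableSet_cell hu hv)).integral_prod_left

lemma setIntegral_cell_eq_integral_setAverage [SFinite μ] (hu : AEMeasurable u μ)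
    (hv : AEMeasurable v μ)
    (hint : Integrable (fun p => (v p.1 - u p.1)⁻¹ • ψ p) (μ.prod volume)) :
    ∫ p in cell u v, (v p.1 - u p.1)⁻¹ • ψ p ∂(μ.prod volume) =
      ∫ x, (⨍ y in Ico (u x) (v x), ψ (x, y)) ∂μ := by
  simp_rw [setAverage_Ico_eq_integral_indicator_cell]
  rw [← integral_indicator₀ (nullMeasurableSet_cell hu hv),
    integral_prod _ (hint.indicator₀ (nullMeasurableSet_cell hu hv))]

end Measurable

theorem tendsto_setIntegral_cell [TopologicalSpace X] [T2Space X] [MeasurableSpace X]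
    [OpensMeasurableSpace X] {μ : Measure X} [SFinite μ] [IsFiniteMeasureOnCompacts μ]
    [CompleteSpace E] {ψ : X × ℝ → E} {ι : Type*} {l : Filter ι} [l.IsCountablyGenerated]
    {u v : ι → X → ℝ} {g : X → ℝ} {s : Set X} (hs : MeasurableSet s)
    (hψ : Continuous ψ) (hψc : HasCompactSupport ψ) (hψs : tsupport ψ ⊆ s ×ˢ univ)
    (hmeas : ∀ᶠ i in l, AEMeasurable (u i) μ ∧ AEMeasurable (v i) μ)
    (hgap : ∀ᶠ i in l, ∃ ε > 0, ∀ x ∈ s, ε ≤ v i x - u i x)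
    (hu : ∀ x ∈ s, Tendsto (fun i => u i x) l (𝓝 (g x)))
    (hv : ∀ x ∈ s, Tendsto (fun i => v i x) l (𝓝 (g x))) :
    Tendsto (fun i => ∫ p in cell (u i) (v i), (v i p.1 - u i p.1)⁻¹ • ψ p ∂(μ.prod volume)) l
      (𝓝 (∫ x in s, ψ (x, g x) ∂μ)) := by
  obtain ⟨C, hC⟩ := hψc.exists_bound_of_continuous hψ
  have hK : IsCompact (Prod.fst '' tsupport ψ) := hψc.image continuous_fst
  have hKs : Prod.fst '' tsupport ψ ⊆ s := by rintro _ ⟨p, hp, rfl⟩; exact (hψs hp).1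
  have huv : ∀ᶠ i in l, ∀ x ∈ s, u i x < v i x := hgap.mono fun i ⟨ε, hε, hεi⟩ x hx => by
    linarith [hεi x hx]
  have hint : ∀ᶠ i in l, Integrable (fun p => (v i p.1 - u i p.1)⁻¹ • ψ p) (μ.prod volume) := by
    filter_upwards [hmeas, hgap] with i ⟨hui, hvi⟩ ⟨ε, hε, hεi⟩
    exact integrable_inv_sub_smul hui hvi (hψ.integrable_of_hasCompactSupport hψc) hε
      fun p hp => hεi p.1 (hψs (subset_tsupport ψ hp)).1
  have hslices : ∀ᶠ i in l, (∫ x, (⨍ y in Ico (u i x) (v i x), ψ (x, y)) ∂μ) =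
      ∫ p in cell (u i) (v i), (v i p.1 - u i p.1)⁻¹ • ψ p ∂(μ.prod volume) := by
    filter_upwards [hmeas, hint] with i ⟨hui, hvi⟩ hi
    exact (setIntegral_cell_eq_integral_setAverage hui hvi hi).symm
  have hdom : Integrable ((Prod.fst '' tsupport ψ).indicator fun _ => C) μ :=
    (integrable_indicator_iff hK.isClosed.measurableSet).2 (integrableOn_const hK.measure_lt_top.ne)
  rw [← integral_indicator hs]
  refine (tendsto_integral_filter_of_dominated_convergence _ ?_ ?_ hdom (Eventually.of_forall
    (tendsto_setAverage_Ico_indicator hψ hψs huv hu hv))).congr' hslices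
  · filter_upwards [hmeas, hint] with i ⟨hui, hvi⟩ hi
    exact (integrable_setAverage_Ico hui hvi hi).aestronglyMeasurable
  · filter_upwards [huv] with i hi
    exact Eventually.of_forall (norm_setAverage_Ico_le_indicator hψ hC fun x hx => hi x (hKs hx))

theorem stmt_15_general {t : ℕ}
    (E' : Set (Fin (t - 1) → ℝ)) (hE' : IsOpen E')
    (Ξ : Set ℝ) (ξb : ℝ)
    (U V : ℝ → (Fin (t - 1) → ℝ) → ℝ)
    (hpc : ∀ ξ ∈ Ξ, PiecewiseC1 (U ξ) ∧ PiecewiseC1 (V ξ))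
    (ε : ℝ → ℝ)
    (hε : ∀ ξ ∈ Ξ, 0 < ε ξ ∧ ∀ l' ∈ E', ε ξ < V ξ l' - U ξ l')
    (G : (Fin (t - 1) → ℝ) → ℝ)
    (hUG : ∀ l' ∈ E', Tendsto (fun ξ => U ξ l') (nhdsWithin ξb (Ξ \ {ξb})) (nhds (G l')))
    (hVG : ∀ l' ∈ E', Tendsto (fun ξ => V ξ l') (nhdsWithin ξb (Ξ \ {ξb})) (nhds (G l')))
    (ψ : ((Fin (t - 1) → ℝ) × ℝ) → ℂ)
    (hψ : ContDiff ℝ 1 ψ) (hψc : HasCompactSupport ψ)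
    (hψs : tsupport ψ ⊆ E' ×ˢ (Set.univ : Set ℝ)) :
    Tendsto
      (fun ξ => ∫ l in {l : (Fin (t - 1) → ℝ) × ℝ | U ξ l.1 ≤ l.2 ∧ l.2 < V ξ l.1},
        Complex.ofReal ((V ξ l.1 - U ξ l.1)⁻¹) * ψ l)
      (nhdsWithin ξb (Ξ \ {ξb}))
      (nhds (∫ l' in E', ψ (l', G l'))) := by
  have hΞ : ∀ᶠ ξ in 𝓝[Ξ \ {ξb}] ξb, ξ ∈ Ξ := eventually_mem_nhdsWithin.mono fun _ h => h.1
  simp_rw [← Complex.real_smul]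
  exact tendsto_setIntegral_cell hE'.measurableSet hψ.continuous hψc hψs
    (hΞ.mono fun ξ hξ => ⟨(hpc ξ hξ).1.aemeasurable, (hpc ξ hξ).2.aemeasurable⟩)
    (hΞ.mono fun ξ hξ => ⟨ε ξ, (hε ξ hξ).1, fun x hx => ((hε ξ hξ).2 x hx).le⟩) hUG hVG

/-- Multi-dimensional cell convergence to the delta of a graph: the normalized indicators
`𝟙_{C_ξ}/(V_ξ − U_ξ)` of the shrinking cells `C_ξ = {(λ′,λ_t) : U_ξ(λ′) ≤ λ_t < V_ξ(λ′)}`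
converge, when paired with any `ψ ∈ C¹_c(E′×ℝ)`, to the pairing
`∫_{E′} ψ(λ′, G(λ′)) dλ′` of `ψ` with the delta distribution supported on the graph
of the common limit `G`. -/
theorem stmt_15 {t : ℕ} (ht : 2 ≤ t)
    (E' : Set (Fin (t - 1) → ℝ)) (hE' : IsOpen E') (hE'ne : E'.Nonempty)
    (Ξ : Set ℝ) (ξb : ℝ) (hacc : (nhdsWithin ξb (Ξ \ {ξb})).NeBot)
    (U V : ℝ → (Fin (t - 1) → ℝ) → ℝ)
    (hpc : ∀ ξ ∈ Ξ, PiecewiseC1 (U ξ) ∧ PiecewiseC1 (V ξ))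
    (ε : ℝ → ℝ)
    (hε : ∀ ξ ∈ Ξ, 0 < ε ξ ∧ ∀ l' ∈ E', ε ξ < V ξ l' - U ξ l')
    (G : (Fin (t - 1) → ℝ) → ℝ) (hG : ContDiffOn ℝ 1 G E')
    (hUG : ∀ l' ∈ E', Tendsto (fun ξ => U ξ l') (nhdsWithin ξb (Ξ \ {ξb})) (nhds (G l')))
    (hVG : ∀ l' ∈ E', Tendsto (fun ξ => V ξ l') (nhdsWithin ξb (Ξ \ {ξb})) (nhds (G l')))
    (M : ℝ) (hM : ∀ ξ ∈ Ξ, ∀ l' ∈ E', |U ξ l' - G l'| ≤ M ∧ |V ξ l' - G l'| ≤ M)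
    (ψ : ((Fin (t - 1) → ℝ) × ℝ) → ℂ)
    (hψ : ContDiff ℝ 1 ψ) (hψc : HasCompactSupport ψ)
    (hψs : tsupport ψ ⊆ E' ×ˢ (Set.univ : Set ℝ)) :
    Tendsto
      (fun ξ => ∫ l in {l : (Fin (t - 1) → ℝ) × ℝ | U ξ l.1 ≤ l.2 ∧ l.2 < V ξ l.1},
        Complex.ofReal ((V ξ l.1 - U ξ l.1)⁻¹) * ψ l)
      (nhdsWithin ξb (Ξ \ {ξb}))
      (nhds (∫ l' in E', ψ (l', G l'))) :=
  stmt_15_general E' hE' Ξ ξb U V hpc ε hε G hUG hVG ψ hψ hψc hψs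
end

section
/- (Main theorem, discrete case.) Let f(x;λ) = λ_t − F(x;λ′) with F ∈ C¹ satisfy the standard nondegeneracy assumptions on W × E. Let m = ∑_{j=1}^{ν} μ_j δ_{x(P_j)} be a discrete image with points x(P_j) ∈ W and weights μ_j ∈ ℝ. For a discretization {λ*, d} of the parameter space with steps d = (d₁,…,d_t) and D = max_k d_k, let H(λ;λ*,d) = ∑_j μ_j p(x(P_j),λ;λ*,d) be the weighted Hough counter, where p(x,λ;λ*,d) = 1 iff −d_t/2 ≤ λ_t − F(x;c′(λ′)) < d_t/2 (c′ denoting rounding of λ′ to the nearest grid point). Then, as D → 0⁺, the rescaled Hough counter H(·;λ*,d)/d_t converges in the sense of distributions on any bounded open T ⊆ E to the generalized Radon transform (R_f m)(λ) = ∑_j μ_j δ(λ_t − F(x(P_j);λ′)): that is, ∫_T (H(λ;λ*,d)/d_t) ψ(λ) dλ → ∑_j μ_j ∫ ψ(λ′, F(x(P_j);λ′)) dλ′ for every ψ ∈ C¹_c(T). -/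
/-!
Fix a point `x(P_j)` and write `G = F(x(P_j); ·)`. By Fubini, the rescaled Hough integral of
`ψ` is the integral over `λ′` of the average of `ψ(λ′, ·)` over the window of width `d_t`
centred at `G(c′(λ′))`. As `|c′(λ′) − λ′| ≤ D/2`, uniform continuity of `G` near the projected
support of `ψ` and of `ψ` itself makes this average uniformly close to `ψ(λ′, G(λ′))` once `D`
is small, and the window averages only see `λ′` in a fixed compact set. Summing over `j` with
the weights `μ_j` gives the theorem.
-/

open MeasureTheory Filter Topology Set

/-- The nearest-point rounding `c′` onto the grid `c + d ℤ^m` (ties rounded up). -/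
noncomputable def gridRound {m : ℕ} (c d a : Fin m → ℝ) : Fin m → ℝ :=
  fun k => c k + (⌊(1 : ℝ) / 2 + (a k - c k) / d k⌋ : ℝ) * d k

/-- The paper's `p(x, λ; λ*, d)` is `houghKernel d_t (F(x; c′(λ′))) λ_t`. -/
noncomputable def houghKernel (h c y : ℝ) : ℝ :=
  if -(h / 2) ≤ y - c ∧ y - c < h / 2 then 1 else 0

section GridRound

variable {m : ℕ} (c : Fin m → ℝ)

theorem abs_gridRound_sub_le {d : Fin m → ℝ} (a : Fin m → ℝ) {k : Fin m} (hd : 0 < d k) :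
    |gridRound c d a k - a k| ≤ d k / 2 := by
  have hu : a k = c k + (a k - c k) / d k * d k := by field_simp; ring
  have h1 := Int.floor_le ((1 : ℝ) / 2 + (a k - c k) / d k)
  have h2 := Int.sub_one_lt_floor ((1 : ℝ) / 2 + (a k - c k) / d k)
  rw [gridRound, abs_le]
  constructor <;> nlinarith

theorem measurable_gridRound (d : Fin m → ℝ) : Measurable (gridRound c d) := by
  refine measurable_pi_lambda _ fun k => measurable_const.add (Measurable.mul_const ?_ _)
  exact measurable_from_top.comp
    (measurable_const.add (((measurable_pi_apply k).sub measurable_const).div_const _)).floor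

theorem dist_gridRound_le {d : Fin m → ℝ} (hd : ∀ k, 0 < d k) (a : Fin m → ℝ) :
    dist (gridRound c d a) a ≤ ‖d‖ / 2 := by
  refine (dist_pi_le_iff (by positivity)).2 fun k => ?_
  rw [Real.dist_eq]
  refine (abs_gridRound_sub_le c a (hd k)).trans ?_
  have := (le_abs_self (d k)).trans (norm_le_pi_norm d k)
  linarith

theorem tendstoUniformly_gridRound {ι : Type*} {L : Filter ι} {d : ι → Fin m → ℝ}
    (hd : Tendsto d L (𝓝[univ.pi fun _ => Ioi 0] 0)) :
    TendstoUniformly (fun i => gridRound c (d i)) id L := by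
  refine Metric.tendstoUniformly_iff.2 fun ε hε => ?_
  filter_upwards [hd self_mem_nhdsWithin, hd (nhdsWithin_le_nhds (Metric.ball_mem_nhds 0 hε))]
    with i hpos hsmall a
  rw [id, dist_comm]
  have := dist_gridRound_le c (fun k => hpos k (mem_univ k)) a
  have := mem_ball_zero_iff.1 hsmall
  linarith

end GridRound

section HoughKernel

variable {E : Type*} [NormedAddCommGroup E] [NormedSpace ℝ E]

theorem houghKernel_smul (h c y : ℝ) (v : E) :
    houghKernel h c y • v = (Ico (c - h / 2) (c + h / 2)).indicator (fun _ => v) y := by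
  by_cases hy : y ∈ Ico (c - h / 2) (c + h / 2)
  · have : -(h / 2) ≤ y - c ∧ y - c < h / 2 := by
      obtain ⟨h1, h2⟩ := hy; constructor <;> linarith
    rw [houghKernel, if_pos this, one_smul, indicator_of_mem hy]
  · have : ¬(-(h / 2) ≤ y - c ∧ y - c < h / 2) := fun ⟨h1, h2⟩ => hy ⟨by linarith, by linarith⟩
    rw [houghKernel, if_neg this, zero_smul, indicator_of_notMem hy]

theorem integrable_houghKernel_smul {α : Type*} [MeasurableSpace α] {μ : Measure (α × ℝ)}
    {g : α → ℝ} (hg : Measurable g) (h : ℝ) {ψ : α × ℝ → E} (hψ : Integrable ψ μ) :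
    Integrable (fun p => houghKernel h (g p.1) p.2 • ψ p) μ := by
  have hstrip : MeasurableSet {p : α × ℝ | p.2 ∈ Ico (g p.1 - h / 2) (g p.1 + h / 2)} :=
    (measurableSet_le ((hg.comp measurable_fst).sub_const _) measurable_snd).inter
      (measurableSet_lt measurable_snd ((hg.comp measurable_fst).add_const _))
  refine (hψ.indicator hstrip).congr (Eventually.of_forall fun p => ?_)
  simp only [houghKernel_smul, indicator_apply, mem_ofPred_eq]

theorem integral_houghKernel_smul [CompleteSpace E] (h c : ℝ) (f : ℝ → E) :
    ∫ y, houghKernel h c y • f y = ∫ y in Ico (c - h / 2) (c + h / 2), f y := by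
  simp only [houghKernel_smul]
  exact integral_indicator measurableSet_Ico

theorem norm_houghKernel_average_sub_le [CompleteSpace E] {h c ε : ℝ} (hh : 0 < h) {f : ℝ → E}
    (hf : Integrable fun y => houghKernel h c y • f y) {v : E}
    (hfv : ∀ y, |y - c| ≤ h / 2 → ‖f y - v‖ ≤ ε) :
    ‖(h⁻¹ • ∫ y, houghKernel h c y • f y) - v‖ ≤ ε := by
  set s := Ico (c - h / 2) (c + h / 2)
  have hs : volume.real s = h := by
    rw [Measure.real, Real.volume_Ico, ENNReal.toReal_ofReal (by linarith)]; ring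
  have hfs : IntegrableOn f s := by
    simp only [houghKernel_smul] at hf
    exact (integrable_indicator_iff measurableSet_Ico).1 hf
  have hv : v = h⁻¹ • ∫ _ in s, v := by
    rw [setIntegral_const, hs, smul_smul, inv_mul_cancel₀ hh.ne', one_smul]
  have hbound : ∀ y ∈ s, ‖f y - v‖ ≤ ε := fun y ⟨h1, h2⟩ =>
    hfv y (abs_le.2 ⟨by linarith, by linarith⟩)
  calc ‖(h⁻¹ • ∫ y, houghKernel h c y • f y) - v‖
      = ‖h⁻¹ • ∫ y in s, (f y - v)‖ := by
        rw [integral_houghKernel_smul h c f,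
          integral_sub hfs (integrableOn_const measure_Ico_lt_top.ne), smul_sub, ← hv]
    _ ≤ h⁻¹ * (ε * h) := by
        rw [norm_smul, Real.norm_of_nonneg (inv_nonneg.2 hh.le)]
        gcongr
        exact hs ▸ norm_setIntegral_le_of_norm_le_const measure_Ico_lt_top hbound
    _ = ε := by field_simp

end HoughKernel

section HoughAverage

variable {E : Type*} [NormedAddCommGroup E] [NormedSpace ℝ E] [CompleteSpace E]

theorem norm_houghKernel_average_prod_sub_le {α : Type*} [MeasurableSpace α] {μ : Measure α}
    [SFinite μ] {ψ : α × ℝ → E} (hψ : Integrable ψ (μ.prod volume)) {g G : α → ℝ}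
    (hg : Measurable g) (hψG : Integrable (fun a => ψ (a, G a)) μ) {B : Set α}
    (hB : MeasurableSet B) (hBμ : μ B ≠ ⊤) (hψB : ∀ a ∉ B, ∀ y, ψ (a, y) = 0) {h ε : ℝ}
    (hh : 0 < h) (hclose : ∀ a ∈ B, ∀ y, |y - g a| ≤ h / 2 → ‖ψ (a, y) - ψ (a, G a)‖ ≤ ε) :
    ‖(h⁻¹ • ∫ p, houghKernel h (g p.1) p.2 • ψ p ∂μ.prod volume) - ∫ a, ψ (a, G a) ∂μ‖
      ≤ ε * μ.real B := by
  have hint := integrable_houghKernel_smul hg h hψ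
  rw [integral_prod _ hint, ← integral_smul,
    ← integral_sub (hint.integral_prod_left.fun_smul h⁻¹) hψG]
  calc _ ≤ ∫ a, B.indicator (fun _ => ε) a ∂μ := by
        refine norm_integral_le_of_norm_le
          ((integrable_indicator_iff hB).2 (integrableOn_const hBμ)) ?_
        filter_upwards [hint.prod_right_ae] with a ha
        by_cases haB : a ∈ B
        · rw [indicator_of_mem haB]
          exact norm_houghKernel_average_sub_le hh ha (hclose a haB)
        · simp [indicator_of_notMem haB, hψB a haB]
    _ = ε * μ.real B := by rw [integral_indicator_const _ hB, smul_eq_mul, mul_comm]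

variable {V : Type*} [MetricSpace V] [ProperSpace V] [MeasurableSpace V] [BorelSpace V]
  {μ : Measure V} [IsFiniteMeasureOnCompacts μ]

theorem tendsto_houghKernel_average {ι : Type*} {L : Filter ι} {r : ι → V → V}
    (hrm : ∀ i, Measurable (r i)) (hr : TendstoUniformly r id L) {h : ι → ℝ}
    (hh : Tendsto h L (𝓝[>] 0)) {ψ : V × ℝ → E} (hψ : Continuous ψ) (hψc : HasCompactSupport ψ)
    {G : V → ℝ} (hG : Continuous G) :
    Tendsto (fun i => (h i)⁻¹ • ∫ p, houghKernel (h i) (G (r i p.1)) p.2 • ψ p ∂μ.prod volume) L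
      (𝓝 (∫ a, ψ (a, G a) ∂μ)) := by
  refine Metric.tendsto_nhds.2 fun ε hε => ?_
  set K := Prod.fst '' tsupport ψ
  have hK : IsCompact K := hψc.image continuous_fst
  have hψK : ∀ a ∉ K, ∀ y, ψ (a, y) = 0 := fun a ha y =>
    image_eq_zero_of_notMem_tsupport fun hay => ha ⟨_, hay, rfl⟩
  set ε' := ε / (μ.real K + 1)
  have hε' : 0 < ε' := by positivity
  obtain ⟨η, hη, hψη⟩ :=
    Metric.uniformContinuous_iff.1 (hψc.uniformContinuous_of_continuous hψ) ε' hε'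
  obtain ⟨δ, hδ, hGδ⟩ := Metric.uniformContinuousOn_iff.1
    ((hK.cthickening (r := 1)).uniformContinuousOn_of_continuous hG.continuousOn) (η / 2)
    (half_pos hη)
  filter_upwards [Metric.tendstoUniformly_iff.1 hr (min 1 δ) (lt_min one_pos hδ),
    hh (Ioo_mem_nhdsGT hη)] with i hri ⟨hi0, hiη⟩
  have hclose : ∀ a ∈ K, ∀ y, |y - G (r i a)| ≤ h i / 2 → ‖ψ (a, y) - ψ (a, G a)‖ ≤ ε' := by
    intro a ha y hy
    have hra : dist (r i a) a < min 1 δ := by rw [dist_comm]; exact hri a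
    have hGa : |G (r i a) - G a| < η / 2 := by
      rw [← Real.dist_eq]
      exact hGδ _ (Metric.mem_cthickening_of_dist_le _ _ _ _ ha (hra.le.trans (min_le_left _ _)))
        _ (Metric.self_subset_cthickening _ ha) (hra.trans_le (min_le_right _ _))
    have hy' : dist (a, y) (a, G a) < η := by
      rw [Prod.dist_eq, dist_self, max_eq_right dist_nonneg, Real.dist_eq]
      calc |y - G a| ≤ |y - G (r i a)| + |G (r i a) - G a| := abs_sub_le _ _ _
        _ < η := by linarith
    rw [← dist_eq_norm]
    exact (hψη hy').le
  have hψG : HasCompactSupport fun a => ψ (a, G a) :=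
    HasCompactSupport.intro hK fun a ha => hψK a ha (G a)
  rw [dist_eq_norm]
  refine (norm_houghKernel_average_prod_sub_le (hψ.integrable_of_hasCompactSupport hψc)
    (hG.measurable.comp (hrm i))
    ((hψ.comp (continuous_id.prodMk hG)).integrable_of_hasCompactSupport hψG)
    hK.isClosed.measurableSet hK.measure_lt_top.ne hψK hi0 hclose).trans_lt ?_
  calc ε' * μ.real K = ε * (μ.real K / (μ.real K + 1)) := by ring
    _ < ε * 1 := by gcongr; exact (div_lt_one (by positivity)).2 (lt_add_one _)
    _ = ε := mul_one ε

end HoughAverage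

theorem setIntegral_ofReal_sum_div_mul_eq {α ι : Type*} [Fintype ι] [MeasurableSpace α]
    {μ : Measure α} {T : Set α} {ψ : α → ℂ} (hψT : ∀ l ∉ T, ψ l = 0) {φ : ι → α → ℝ}
    (hφ : ∀ j, Integrable (fun l => φ j l • ψ l) μ) (w : ι → ℝ) (h : ℝ) :
    ∫ l in T, ((∑ j, w j * φ j l) / h : ℝ) * ψ l ∂μ
      = ∑ j, (w j : ℂ) * (h⁻¹ • ∫ l, φ j l • ψ l ∂μ) := by
  rw [setIntegral_eq_integral_of_forall_compl_eq_zero fun l hl => by rw [hψT l hl, mul_zero]]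
  have hsum : ∀ l, ((∑ j, w j * φ j l) / h : ℝ) * ψ l
      = ∑ j, ((w j : ℂ) * (h⁻¹ : ℝ)) * (φ j l • ψ l) := by
    intro l
    simp only [Complex.real_smul, Complex.ofReal_sum, Complex.ofReal_mul,
      Complex.ofReal_inv, div_eq_mul_inv, Finset.sum_mul]
    exact Finset.sum_congr rfl fun j _ => by ring
  simp_rw [hsum]
  rw [integral_finsetSum _ fun j _ => (hφ j).const_mul _]
  refine Finset.sum_congr rfl fun j _ => ?_
  rw [integral_const_mul, Complex.real_smul, mul_assoc]

theorem stmt_18_general {n t : ℕ}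
    (F : (Fin n → ℝ) → (Fin (t - 1) → ℝ) → ℝ)
    (hF : ContDiff ℝ 1 (fun p : (Fin n → ℝ) × ((Fin (t - 1) → ℝ)) => F p.1 p.2))
    (ν : ℕ) (x : Fin ν → (Fin n → ℝ)) (μ : Fin ν → ℝ)
    (T : Set ((Fin (t - 1) → ℝ) × ℝ))
    (lamStar : Fin (t - 1) → ℝ)
    (ψ : ((Fin (t - 1) → ℝ) × ℝ) → ℂ)
    (hψ : ContDiff ℝ 1 ψ) (hψc : HasCompactSupport ψ) (hψs : tsupport ψ ⊆ T) :
    ∀ ε > 0, ∃ δ > 0, ∀ (d' : Fin (t - 1) → ℝ) (dt : ℝ),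
      (∀ k, 0 < d' k ∧ d' k < δ) → 0 < dt → dt < δ →
      ‖(∫ l in T,
          Complex.ofReal ((∑ j : Fin ν, μ j *
            (if -(dt / 2) ≤ l.2 - F (x j)
                  (fun k => lamStar k + (⌊(1 : ℝ) / 2 + (l.1 k - lamStar k) / d' k⌋ : ℝ) * d' k) ∧
                l.2 - F (x j)
                  (fun k => lamStar k + (⌊(1 : ℝ) / 2 + (l.1 k - lamStar k) / d' k⌋ : ℝ) * d' k)
                  < dt / 2
              then 1 else 0)) / dt) * ψ l) -
        ∑ j : Fin ν, Complex.ofReal (μ j) * ∫ l' : Fin (t - 1) → ℝ, ψ (l', F (x j) l')‖ < ε := by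
  set S : Set ((Fin (t - 1) → ℝ) × ℝ) := (univ.pi fun _ => Ioi 0) ×ˢ Ioi 0
  have hFx : ∀ j, Continuous (F (x j)) := fun j =>
    hF.continuous.comp (Continuous.prodMk_right (x j))
  have hconv : Tendsto (fun p : (Fin (t - 1) → ℝ) × ℝ => ∑ j, (μ j : ℂ) *
      (p.2⁻¹ • ∫ l, houghKernel p.2 (F (x j) (gridRound lamStar p.1 l.1)) l.2 • ψ l))
      (𝓝[S] 0) (𝓝 (∑ j, (μ j : ℂ) * ∫ l', ψ (l', F (x j) l'))) := by
    rw [← Prod.mk_zero_zero, nhdsWithin_prod_eq]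
    exact tendsto_finsetSum _ fun j _ => (tendsto_houghKernel_average
      (fun _ => measurable_gridRound lamStar _) (tendstoUniformly_gridRound lamStar tendsto_fst)
      tendsto_snd hψ.continuous hψc (hFx j)).const_mul _
  intro ε hε
  obtain ⟨δ, hδ, hδε⟩ := Metric.tendsto_nhdsWithin_nhds.1 hconv ε hε
  refine ⟨δ, hδ, fun d' dt hd' hdt hdtδ => ?_⟩
  have hψT : ∀ l ∉ T, ψ l = 0 := fun l hl => image_eq_zero_of_notMem_tsupport fun h => hl (hψs h)
  simp only [← gridRound.eq_1, ← houghKernel.eq_1]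
  eta_reduce
  rw [setIntegral_ofReal_sum_div_mul_eq hψT
    (fun j => integrable_houghKernel_smul (g := fun a => F (x j) (gridRound lamStar d' a))
      ((hFx j).measurable.comp (measurable_gridRound lamStar d')) dt
      (hψ.continuous.integrable_of_hasCompactSupport hψc)), ← dist_eq_norm]
  have hdist : dist (d', dt) 0 < δ := by
    rw [Prod.dist_eq]
    refine max_lt ((dist_pi_lt_iff hδ).2 fun k => ?_) ?_
    · simpa [Real.dist_eq, abs_of_pos (hd' k).1] using (hd' k).2
    · simpa [Real.dist_eq, abs_of_pos hdt] using hdtδ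
  have hmem : (d', dt) ∈ S := ⟨fun k _ => (hd' k).1, hdt⟩
  exact hδε (x := (d', dt)) hmem hdist

/-- Main theorem, discrete case: for a discrete image `m = ∑_j μ_j δ_{x(P_j)}` and a
`λ_t`-solvable `C¹` family `f(x;λ) = λ_t − F(x;λ′)` satisfying the nondegeneracy
assumptions, the rescaled weighted Hough counter `H(·;λ*,d)/d_t` (built from the kernel
`p(x,λ;λ*,d) = 𝟙{−d_t/2 ≤ λ_t − F(x;c′(λ′)) < d_t/2}`, with `c′` the nearest-grid-point
rounding) converges, as the maximal discretization step tends to `0⁺`, in the sense of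
distributions on any bounded open `T ⊆ E`, to the generalized Radon transform
`(R_f m) = ∑_j μ_j δ(λ_t − F(x(P_j);λ′))`. -/
theorem stmt_18 {n t : ℕ} (hn : 2 ≤ n) (ht : 2 ≤ t)
    (W : Set (Fin n → ℝ)) (hW : IsOpen W) (hWne : W.Nonempty)
    (E : Set ((Fin (t - 1) → ℝ) × ℝ)) (hE : IsOpen E) (hEne : E.Nonempty)
    (F : (Fin n → ℝ) → (Fin (t - 1) → ℝ) → ℝ)
    (hF : ContDiff ℝ 1 (fun p : (Fin n → ℝ) × ((Fin (t - 1) → ℝ)) => F p.1 p.2))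
    (hSne : ∀ l ∈ E, ({x ∈ W | F x l.1 = l.2} : Set (Fin n → ℝ)).Nonempty)
    (hgrad : ∀ l ∈ E, ∀ x ∈ W, F x l.1 = l.2 → fderiv ℝ (fun y => F y l.1) x ≠ 0)
    (ν : ℕ) (x : Fin ν → (Fin n → ℝ)) (hx : ∀ j, x j ∈ W) (μ : Fin ν → ℝ)
    (T : Set ((Fin (t - 1) → ℝ) × ℝ)) (hT : IsOpen T)
    (hTb : Bornology.IsBounded T) (hTE : T ⊆ E)
    (lamStar : Fin (t - 1) → ℝ)
    (ψ : ((Fin (t - 1) → ℝ) × ℝ) → ℂ)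
    (hψ : ContDiff ℝ 1 ψ) (hψc : HasCompactSupport ψ) (hψs : tsupport ψ ⊆ T) :
    ∀ ε > 0, ∃ δ > 0, ∀ (d' : Fin (t - 1) → ℝ) (dt : ℝ),
      (∀ k, 0 < d' k ∧ d' k < δ) → 0 < dt → dt < δ →
      ‖(∫ l in T,
          Complex.ofReal ((∑ j : Fin ν, μ j *
            (if -(dt / 2) ≤ l.2 - F (x j)
                  (fun k => lamStar k + (⌊(1 : ℝ) / 2 + (l.1 k - lamStar k) / d' k⌋ : ℝ) * d' k) ∧
                l.2 - F (x j)
                  (fun k => lamStar k + (⌊(1 : ℝ) / 2 + (l.1 k - lamStar k) / d' k⌋ : ℝ) * d' k)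
                  < dt / 2
              then 1 else 0)) / dt) * ψ l) -
        ∑ j : Fin ν, Complex.ofReal (μ j) * ∫ l' : Fin (t - 1) → ℝ, ψ (l', F (x j) l')‖ < ε :=
  stmt_18_general F hF ν x μ T lamStar ψ hψ hψc hψs
end
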